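/- For the finite-dimensional Hamiltonian Z4^e = (I_p + I_q)(J_p + J_q) + (α_p conj(α_q) conj(β_p) β_q + conj(α_p) α_q β_p conj(β_q)) on the modes p, q (with I_j = |α_j|^2, J_j = |β_j|^2), one has {I_p, Z4^e} = −i(conj(α_p) β_p α_q conj(β_q) − α_p conj(β_p) conj(α_q) β_q), and {I_p, Z4^e} = −{I_q, Z4^e} = −{J_p, Z4^e} = {J_q, Z4^e}; consequently {I_p + I_q, Z4^e} = {J_p + J_q, Z4^e} = {I_q + J_q, Z4^e} = 0. -/

import Mathlib

open Complex

/-- Phase space `(α, ᾱ, β, β̄)` for the two modes `p, q` (index `0 = p`, `1 = q`);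
the conjugate variables are treated as independent coordinates. -/
abbrev PS2 := (Fin 2 → ℂ) × (Fin 2 → ℂ) × (Fin 2 → ℂ) × (Fin 2 → ℂ)

noncomputable def dA (j : Fin 2) (f : PS2 → ℂ) (z : PS2) : ℂ :=
  deriv (fun w => f (Function.update z.1 j w, z.2.1, z.2.2.1, z.2.2.2)) (z.1 j)

noncomputable def dAbar (j : Fin 2) (f : PS2 → ℂ) (z : PS2) : ℂ :=
  deriv (fun w => f (z.1, Function.update z.2.1 j w, z.2.2.1, z.2.2.2)) (z.2.1 j)

noncomputable def dB (j : Fin 2) (f : PS2 → ℂ) (z : PS2) : ℂ :=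
  deriv (fun w => f (z.1, z.2.1, Function.update z.2.2.1 j w, z.2.2.2)) (z.2.2.1 j)

noncomputable def dBbar (j : Fin 2) (f : PS2 → ℂ) (z : PS2) : ℂ :=
  deriv (fun w => f (z.1, z.2.1, z.2.2.1, Function.update z.2.2.2 j w)) (z.2.2.2 j)

/-- The canonical Poisson bracket `{f,g} = −i Σ_j (∂f/∂α_j ∂g/∂ᾱ_j − ... )`. -/
noncomputable def pb (f g : PS2 → ℂ) (z : PS2) : ℂ :=
  -Complex.I * ∑ j : Fin 2,
    (dA j f z * dAbar j g z - dAbar j f z * dA j g z +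
      dB j f z * dBbar j g z - dBbar j f z * dB j g z)

noncomputable def Ip (z : PS2) : ℂ := z.1 0 * z.2.1 0
noncomputable def Iq (z : PS2) : ℂ := z.1 1 * z.2.1 1
noncomputable def Jp (z : PS2) : ℂ := z.2.2.1 0 * z.2.2.2 0
noncomputable def Jq (z : PS2) : ℂ := z.2.2.1 1 * z.2.2.2 1

/-- `Z4^e = (I_p + I_q)(J_p + J_q) + (α_p ᾱ_q β̄_p β_q + ᾱ_p α_q β_p β̄_q)`. -/
noncomputable def Z4e (z : PS2) : ℂ :=
  (Ip z + Iq z) * (Jp z + Jq z) +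
    (z.1 0 * z.2.1 1 * z.2.2.2 0 * z.2.2.1 1 + z.2.1 0 * z.1 1 * z.2.2.1 0 * z.2.2.2 1)

/-! The bracket of a weighted sum of actions `Σ_j (a_j I_j + b_j J_j)` with `g` is `-i` times
the derivative of `g` along the phase rotation `α_j ↦ e^{i a_j θ} α_j`, `β_j ↦ e^{i b_j θ} β_j`.
The term `(I_p + I_q)(J_p + J_q)` of `Z4^e` is invariant under every such rotation, while the
resonant term `α_p ᾱ_q β̄_p β_q` and its conjugate carry the charges `(1, -1, -1, 1)` with
respect to `(I_p, I_q, J_p, J_q)`. Hence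
`{Σ_j (a_j I_j + b_j J_j), Z4^e} = (a_p - a_q - b_p + b_q) {I_p, Z4^e}`,
and each claim is a choice of weights. -/

-- Every partial derivative below is of a function affine in the varied coordinate.
theorem deriv_eq_sub_of_affine {𝕜 : Type*} [NontriviallyNormedField 𝕜] {f : 𝕜 → 𝕜}
    (hf : ∀ w, f w = f 0 + w * (f 1 - f 0)) (x : 𝕜) : deriv f x = f 1 - f 0 := by
  rw [show f = fun w => f 0 + w * (f 1 - f 0) from funext hf]
  simp

noncomputable def weightedAction (a b : Fin 2 → ℂ) (z : PS2) : ℂ :=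
  ∑ j, (a j * (z.1 j * z.2.1 j) + b j * (z.2.2.1 j * z.2.2.2 j))

noncomputable def resonantExchange (z : PS2) : ℂ :=
  z.2.1 0 * z.2.2.1 0 * z.1 1 * z.2.2.2 1 - z.1 0 * z.2.2.2 0 * z.2.1 1 * z.2.2.1 1

section
variable (a b : Fin 2 → ℂ) (j : Fin 2) (z : PS2)

theorem dA_weightedAction : dA j (weightedAction a b) z = a j * z.2.1 j := by
  fin_cases j <;> simp [dA, weightedAction, Fin.sum_univ_two]

theorem dAbar_weightedAction : dAbar j (weightedAction a b) z = a j * z.1 j := by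
  fin_cases j <;> simp [dAbar, weightedAction, Fin.sum_univ_two]

theorem dB_weightedAction : dB j (weightedAction a b) z = b j * z.2.2.2 j := by
  fin_cases j <;> simp [dB, weightedAction, Fin.sum_univ_two]

theorem dBbar_weightedAction : dBbar j (weightedAction a b) z = b j * z.2.2.1 j := by
  fin_cases j <;> simp [dBbar, weightedAction, Fin.sum_univ_two]

end

theorem pb_weightedAction (a b : Fin 2 → ℂ) (g : PS2 → ℂ) (z : PS2) :
    pb (weightedAction a b) g z = -I * ∑ j, (a j * (z.2.1 j * dAbar j g z - z.1 j * dA j g z) +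
      b j * (z.2.2.2 j * dBbar j g z - z.2.2.1 j * dB j g z)) := by
  simp only [pb, dA_weightedAction, dAbar_weightedAction, dB_weightedAction, dBbar_weightedAction]
  congr 1
  exact Finset.sum_congr rfl fun j _ => by ring

section
variable (z : PS2)

theorem Z4e_charge_alpha_p :
    z.2.1 0 * dAbar 0 Z4e z - z.1 0 * dA 0 Z4e z = resonantExchange z := by
  rw [dAbar, dA, deriv_eq_sub_of_affine, deriv_eq_sub_of_affine]
  · simp [Z4e, Ip, Iq, Jp, Jq, resonantExchange]; ring
  all_goals intro w; simp [Z4e, Ip, Iq, Jp, Jq]; ring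

theorem Z4e_charge_alpha_q :
    z.2.1 1 * dAbar 1 Z4e z - z.1 1 * dA 1 Z4e z = -resonantExchange z := by
  rw [dAbar, dA, deriv_eq_sub_of_affine, deriv_eq_sub_of_affine]
  · simp [Z4e, Ip, Iq, Jp, Jq, resonantExchange]; ring
  all_goals intro w; simp [Z4e, Ip, Iq, Jp, Jq]; ring

theorem Z4e_charge_beta_p :
    z.2.2.2 0 * dBbar 0 Z4e z - z.2.2.1 0 * dB 0 Z4e z = -resonantExchange z := by
  rw [dBbar, dB, deriv_eq_sub_of_affine, deriv_eq_sub_of_affine]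
  · simp [Z4e, Ip, Iq, Jp, Jq, resonantExchange]; ring
  all_goals intro w; simp [Z4e, Ip, Iq, Jp, Jq]; ring

theorem Z4e_charge_beta_q :
    z.2.2.2 1 * dBbar 1 Z4e z - z.2.2.1 1 * dB 1 Z4e z = resonantExchange z := by
  rw [dBbar, dB, deriv_eq_sub_of_affine, deriv_eq_sub_of_affine]
  · simp [Z4e, Ip, Iq, Jp, Jq, resonantExchange]; ring
  all_goals intro w; simp [Z4e, Ip, Iq, Jp, Jq]; ring

theorem pb_weightedAction_Z4e (a b : Fin 2 → ℂ) :
    pb (weightedAction a b) Z4e z = (a 0 - a 1 - b 0 + b 1) * (-I * resonantExchange z) := by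
  rw [pb_weightedAction, Fin.sum_univ_two, Z4e_charge_alpha_p, Z4e_charge_alpha_q,
    Z4e_charge_beta_p, Z4e_charge_beta_q]
  ring

end

theorem Z4e_brackets (z : PS2) :
    pb Ip Z4e z =
      -Complex.I * (z.2.1 0 * z.2.2.1 0 * z.1 1 * z.2.2.2 1 -
        z.1 0 * z.2.2.2 0 * z.2.1 1 * z.2.2.1 1) ∧
    pb Ip Z4e z = -pb Iq Z4e z ∧
    pb Ip Z4e z = -pb Jp Z4e z ∧
    pb Ip Z4e z = pb Jq Z4e z ∧
    pb (fun w => Ip w + Iq w) Z4e z = 0 ∧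
    pb (fun w => Jp w + Jq w) Z4e z = 0 ∧
    pb (fun w => Iq w + Jq w) Z4e z = 0 := by
  have bracket (f : PS2 → ℂ) (a b : Fin 2 → ℂ) (hf : f = weightedAction a b) :
      pb f Z4e z = (a 0 - a 1 - b 0 + b 1) * (-I * resonantExchange z) :=
    hf ▸ pb_weightedAction_Z4e z a b
  rw [bracket Ip ![1, 0] 0, bracket Iq ![0, 1] 0, bracket Jp 0 ![1, 0], bracket Jq 0 ![0, 1],
    bracket _ ![1, 1] 0, bracket _ 0 ![1, 1], bracket _ ![0, 1] ![0, 1]]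
  · simp [resonantExchange]
  all_goals funext w; simp [weightedAction, Ip, Iq, Jp, Jq, Fin.sum_univ_two]
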